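/- arXiv:1807.09410 — 3 statements merged into one kernel-verified Lean document; each statement's English description precedes it below -/
import Mathlib

section
/- There is an absolute constant C such that for all real x ≥ 2 and y ≥ 1: ∑_{2 < p ≤ x, p prime} |∑_{1 ≤ a ≤ y} (a/p)| ≤ C·x^{3/2}, where (a/p) is the Legendre symbol. -/
/-!
Pólya–Vinogradov on average. For an odd prime `p` let `χ` be the quadratic character and `g` its
Gauss sum, so `|g| = √p`. Expanding `χ(a) g = ∑ᵤ χ(u) e(au/p)` turns `g · ∑_{a ≤ N} χ(a)` into
`∑ᵤ χ(u) ∑_{a ≤ N} e(au/p)`; each inner geometric sum is at most `1 / |sin (π u/p)|`, and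
`1 / sin (π t) ≤ (1/t + 1/(1-t)) / 2` bounds the total by `p (1 + log p)`. Hence every term of the
outer sum is at most `√x (1 + log p)`, and Chebyshev's bound `∑_{p ≤ x} log p ≤ x log 4` gives
`x^{3/2}` after summing over `p ≤ x`.
-/

open Finset Real

lemma two_mul_le_sin_pi_mul {t : ℝ} (h0 : 0 ≤ t) (h1 : t ≤ 1 / 2) : 2 * t ≤ sin (π * t) := by
  simpa [← mul_assoc] using le_sin_mul (x := 2 * t) (by linarith) (by linarith)

lemma inv_sin_pi_mul_le {t : ℝ} (h0 : 0 < t) (h1 : t < 1) :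
    (sin (π * t))⁻¹ ≤ (t⁻¹ + (1 - t)⁻¹) / 2 := by
  rcases le_total t (1 / 2) with ht | ht
  · calc (sin (π * t))⁻¹ ≤ (2 * t)⁻¹ := inv_anti₀ (by positivity) (two_mul_le_sin_pi_mul h0.le ht)
      _ ≤ _ := by rw [mul_inv]; linarith [inv_pos.2 (sub_pos.2 h1)]
  · calc (sin (π * t))⁻¹ = (sin (π * (1 - t)))⁻¹ := by rw [mul_one_sub, sin_pi_sub]
      _ ≤ (2 * (1 - t))⁻¹ :=
        inv_anti₀ (by linarith) (two_mul_le_sin_pi_mul (by linarith) (by linarith))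
      _ ≤ _ := by rw [mul_inv]; linarith [inv_pos.2 h0]

lemma sum_Ico_inv_sin_pi_mul_div_le (n : ℕ) :
    ∑ m ∈ Ico 1 n, (sin (π * (m / n)))⁻¹ ≤ n * (1 + log n) := by
  have hterm : ∀ m ∈ Ico 1 n, (sin (π * (m / n)))⁻¹ ≤ (n / m + n / (n - m : ℕ)) / 2 := by
    intro m hm
    obtain ⟨h1, h2⟩ := mem_Ico.1 hm
    have hm : (0 : ℝ) < m := by exact_mod_cast h1
    have hmn : (0 : ℝ) < n - m := by simpa using (Nat.cast_lt (α := ℝ)).2 h2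
    have hn : (0 : ℝ) < n := by linarith
    convert inv_sin_pi_mul_le (div_pos hm hn) ((div_lt_one hn).2 (by linarith)) using 2
    rw [Nat.cast_sub h2.le]
    field_simp
  have hreflect : ∑ m ∈ Ico 1 n, (n / (n - m : ℕ) : ℝ) = ∑ m ∈ Ico 1 n, (n / m : ℝ) := by
    simpa using sum_Ico_reflect (fun m : ℕ ↦ (n / m : ℝ)) 1 (Nat.le_succ n)
  have hharmonic : ∑ m ∈ Ico 1 n, (m : ℝ)⁻¹ ≤ 1 + log n := by
    refine le_trans ?_ (harmonic_le_one_add_log n)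
    rw [harmonic_eq_sum_Icc]
    push_cast
    exact sum_le_sum_of_subset_of_nonneg Ico_subset_Icc_self fun _ _ _ ↦ by positivity
  calc _ ≤ ∑ m ∈ Ico 1 n, (n / m + n / (n - m : ℕ) : ℝ) / 2 := sum_le_sum hterm
    _ = n * ∑ m ∈ Ico 1 n, (m : ℝ)⁻¹ := by
      rw [← sum_div, sum_add_distrib, hreflect, ← two_mul, mul_div_cancel_left₀ _ two_ne_zero,
        mul_sum]
      simp only [div_eq_mul_inv]
    _ ≤ n * (1 + log n) := by gcongr

lemma norm_sum_Icc_pow_le {z : ℂ} (hz : ‖z‖ = 1) (hz1 : z ≠ 1) (N : ℕ) :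
    ‖∑ a ∈ Icc 1 N, z ^ a‖ ≤ 2 / ‖z - 1‖ := by
  rw [← Ico_add_one_right_eq_Icc, geom_sum_Ico hz1 (by omega), norm_div]
  gcongr
  calc ‖z ^ (N + 1) - z ^ 1‖ ≤ ‖z ^ (N + 1)‖ + ‖z ^ 1‖ := norm_sub_le _ _
    _ = 2 := by rw [norm_pow, norm_pow, hz, one_pow, one_pow, one_add_one_eq_two]

namespace ZMod

lemma sum_comp_val {M : Type*} [AddCommMonoid M] (n : ℕ) [NeZero n] (f : ℕ → M) :
    ∑ u : ZMod n, f u.val = ∑ m ∈ range n, f m := by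
  obtain ⟨k, rfl⟩ : ∃ k, n = k + 1 := Nat.exists_eq_succ_of_ne_zero (NeZero.ne n)
  exact Fin.sum_univ_eq_sum_range f (k + 1)

variable {n : ℕ} [NeZero n]

lemma norm_stdAddChar (j : ZMod n) : ‖stdAddChar j‖ = 1 :=
  Circle.norm_coe _

lemma norm_stdAddChar_sub_one (j : ZMod n) :
    ‖stdAddChar j - 1‖ = 2 * sin (π * (j.val / n)) := by
  have hθ : stdAddChar j = Complex.exp (Complex.I * (2 * (π * (j.val / n)) : ℝ)) := by
    rw [stdAddChar_apply, toCircle_apply]; push_cast; ring_nf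
  have hsin : 0 ≤ sin (π * (j.val / n)) := by
    apply sin_nonneg_of_nonneg_of_le_pi (by positivity)
    have : (j.val : ℝ) / n ≤ 1 := div_le_one_of_le₀ (by exact_mod_cast (val_lt j).le) (by positivity)
    nlinarith [pi_pos]
  rw [hθ, Complex.norm_exp_I_mul_ofReal_sub_one, mul_div_cancel_left₀ _ two_ne_zero, norm_mul,
    Real.norm_of_nonneg hsin, Real.norm_two]

lemma norm_sum_Icc_stdAddChar_mul_le {u : ZMod n} (hu : u ≠ 0) (N : ℕ) :
    ‖∑ a ∈ Icc 1 N, stdAddChar ((a : ZMod n) * u)‖ ≤ (sin (π * (u.val / n)))⁻¹ := by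
  have hpow : ∀ a : ℕ, stdAddChar ((a : ZMod n) * u) = stdAddChar u ^ a := fun a ↦ by
    rw [← nsmul_eq_mul, AddChar.map_nsmul_eq_pow]
  have hne : stdAddChar u ≠ 1 := by
    rwa [← AddChar.map_zero_eq_one (stdAddChar (N := n)), (injective_stdAddChar (N := n)).ne_iff]
  simp_rw [hpow]
  refine (norm_sum_Icc_pow_le (norm_stdAddChar u) hne N).trans_eq ?_
  rw [norm_stdAddChar_sub_one, div_mul_cancel_left₀ two_ne_zero]

end ZMod

section GaussSum

variable {F : Type*} [Field F] [Fintype F]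

lemma sum_mulChar_mul_addChar_mul {R : Type*} [CommRing R] [IsDomain R] {χ : MulChar F R}
    (hχ : χ ≠ 1) (ψ : AddChar F R) (t : F) :
    ∑ u, χ u * ψ (t * u) = χ⁻¹ t * gaussSum χ ψ := by
  rcases eq_or_ne t 0 with rfl | ht
  · simp [MulChar.sum_eq_zero_of_ne_one hχ, MulChar.map_zero]
  · simpa [gaussSum] using gaussSum_mulShift_eq χ ψ (Units.mk0 t ht)

lemma norm_gaussSum_of_isQuadratic {χ : MulChar F ℂ} (hχ : χ ≠ 1) (hq : χ.IsQuadratic)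
    {ψ : AddChar F ℂ} (hψ : ψ.IsPrimitive) :
    ‖gaussSum χ ψ‖ = √(Fintype.card F) := by
  have hχneg : ‖χ (-1)‖ = 1 := by
    have : ‖χ (-1)‖ ^ 2 = 1 := by rw [← norm_pow, ← map_pow, neg_one_sq, map_one, norm_one]
    exact (pow_eq_one_iff_of_nonneg (norm_nonneg _) two_ne_zero).1 this
  rw [eq_comm, sqrt_eq_iff_eq_sq (by positivity) (norm_nonneg _), ← norm_pow, gaussSum_sq hχ hq hψ,
    norm_mul, hχneg, one_mul, Complex.norm_natCast]

end GaussSum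

theorem norm_sum_Icc_mulChar_le {p : ℕ} [Fact p.Prime] {χ : MulChar (ZMod p) ℂ} (hχ : χ ≠ 1)
    (hq : χ.IsQuadratic) (N : ℕ) :
    ‖∑ a ∈ Icc 1 N, χ a‖ ≤ √p * (1 + log p) := by
  have hp : (0 : ℝ) < √p := sqrt_pos.2 (by exact_mod_cast (Fact.out : p.Prime).pos)
  have hg : ‖gaussSum χ ZMod.stdAddChar‖ = √p := by
    simpa using norm_gaussSum_of_isQuadratic hχ hq (ZMod.isPrimitive_stdAddChar p)
  have hexpand : (∑ a ∈ Icc 1 N, χ a) * gaussSum χ ZMod.stdAddChar =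
      ∑ u, χ u * ∑ a ∈ Icc 1 N, ZMod.stdAddChar ((a : ZMod p) * u) := by
    simp_rw [sum_mul, mul_sum]
    rw [sum_comm]
    refine sum_congr rfl fun a _ ↦ ?_
    rw [sum_mulChar_mul_addChar_mul hχ, hq.inv]
  have hterm (u : ZMod p) : ‖χ u * ∑ a ∈ Icc 1 N, ZMod.stdAddChar ((a : ZMod p) * u)‖ ≤
      (sin (π * (u.val / p)))⁻¹ := by
    rcases eq_or_ne u 0 with rfl | hu
    -- both sides vanish: `χ 0 = 0`, and `(sin 0)⁻¹ = 0` by Lean's convention `0⁻¹ = 0`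
    · simp [MulChar.map_zero]
    · rw [norm_mul]
      exact (mul_le_of_le_one_left (norm_nonneg _) (DirichletCharacter.norm_le_one χ u)).trans
        (ZMod.norm_sum_Icc_stdAddChar_mul_le hu N)
  have hsum : ∑ u : ZMod p, (sin (π * (u.val / p)))⁻¹ ≤ p * (1 + log p) := by
    rw [ZMod.sum_comp_val p fun m ↦ (sin (π * (m / p)))⁻¹, range_eq_Ico,
      sum_eq_sum_Ico_succ_bot (Fact.out : p.Prime).pos]
    simpa using sum_Ico_inv_sin_pi_mul_div_le p
  refine le_of_mul_le_mul_right ?_ hp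
  calc ‖∑ a ∈ Icc 1 N, χ a‖ * √p
        = ‖∑ u, χ u * ∑ a ∈ Icc 1 N, ZMod.stdAddChar ((a : ZMod p) * u)‖ := by
          rw [← hexpand, norm_mul, hg]
    _ ≤ p * (1 + log p) := (norm_sum_le _ _).trans ((sum_le_sum fun u _ ↦ hterm u).trans hsum)
    _ = √p * (1 + log p) * √p := by rw [mul_right_comm, mul_self_sqrt (Nat.cast_nonneg p)]

lemma jacobiSym_cast_eq_ringHomComp_quadraticChar_apply {p : ℕ} [Fact p.Prime] (a : ℤ) :
    (jacobiSym a p : ℂ) = (quadraticChar (ZMod p)).ringHomComp (Int.castRingHom ℂ) a := by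
  rw [← jacobiSym.legendreSym.to_jacobiSym, legendreSym, MulChar.ringHomComp_apply]; rfl

theorem abs_sum_Icc_jacobiSym_le {p : ℕ} [Fact p.Prime] (hp : p ≠ 2) (N : ℕ) :
    |∑ a ∈ Icc 1 N, (jacobiSym a p : ℝ)| ≤ √p * (1 + log p) := by
  set χ := (quadraticChar (ZMod p)).ringHomComp (Int.castRingHom ℂ)
  have hχ : χ ≠ 1 := (MulChar.ringHomComp_ne_one_iff Int.cast_injective).2
    (quadraticChar_ne_one (by rwa [ZMod.ringChar_zmod_n]))
  have hq : χ.IsQuadratic := (quadraticChar_isQuadratic (ZMod p)).comp _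
  convert norm_sum_Icc_mulChar_le hχ hq N using 1
  rw [← Real.norm_eq_abs, ← Complex.norm_real, Complex.ofReal_sum]
  push_cast
  simp_rw [jacobiSym_cast_eq_ringHomComp_quadraticChar_apply, Int.cast_natCast]
  rfl

lemma sum_primes_one_add_log_le {x : ℝ} (hx : 0 ≤ x) :
    ∑ p ∈ Ioc 0 ⌊x⌋₊ with p.Prime, (1 + log p) ≤ (1 + log 4) * x := by
  have hcard : ((#{p ∈ Ioc 0 ⌊x⌋₊ | p.Prime} : ℕ) : ℝ) ≤ x := by
    refine le_trans ?_ (Nat.floor_le hx)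
    exact_mod_cast (card_filter_le _ _).trans (by simp)
  rw [sum_add_distrib, sum_const, nsmul_one, add_mul, one_mul]
  exact add_le_add hcard (Chebyshev.theta_le_log4_mul_x hx)

/-- Pólya–Vinogradov applied on average: `∑_{2<p≤x} |∑_{a≤y} (a/p)| ≪ x^{3/2}`.
Here `(a/p)` is the Legendre symbol, realized as the Jacobi symbol `jacobiSym a p`. -/
theorem legendre_sum_average_polya_vinogradov :
    ∃ C : ℝ, ∀ x y : ℝ, 2 ≤ x → 1 ≤ y →
      ∑ p ∈ (Finset.Ioc 2 ⌊x⌋₊).filter Nat.Prime,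
          |∑ a ∈ Finset.Icc 1 ⌊y⌋₊, (jacobiSym (a : ℤ) p : ℝ)|
        ≤ C * x ^ ((3 : ℝ) / 2) := by
  refine ⟨1 + log 4, fun x y hx _ ↦ ?_⟩
  have hx0 : 0 ≤ x := by linarith
  have hlog (p : ℕ) : 0 ≤ 1 + log p := add_nonneg zero_le_one (log_natCast_nonneg p)
  have hterm : ∀ p ∈ (Ioc 2 ⌊x⌋₊).filter Nat.Prime,
      |∑ a ∈ Icc 1 ⌊y⌋₊, (jacobiSym a p : ℝ)| ≤ √x * (1 + log p) := by
    intro p hp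
    obtain ⟨hpx, hprime⟩ := mem_filter.1 hp
    have : Fact p.Prime := ⟨hprime⟩
    refine (abs_sum_Icc_jacobiSym_le (mem_Ioc.1 hpx).1.ne' _).trans ?_
    gcongr
    exact (Nat.cast_le.2 (mem_Ioc.1 hpx).2).trans (Nat.floor_le hx0)
  calc _ ≤ ∑ p ∈ Ioc 2 ⌊x⌋₊ with p.Prime, √x * (1 + log p) := sum_le_sum hterm
    _ ≤ ∑ p ∈ Ioc 0 ⌊x⌋₊ with p.Prime, √x * (1 + log p) :=
        sum_le_sum_of_subset_of_nonneg (filter_subset_filter _ (Ioc_subset_Ioc_left zero_le_two))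
          fun p _ _ ↦ mul_nonneg (sqrt_nonneg x) (hlog p)
    _ = √x * ∑ p ∈ Ioc 0 ⌊x⌋₊ with p.Prime, (1 + log p) := (mul_sum _ _ _).symm
    _ ≤ √x * ((1 + log 4) * x) := by gcongr; exact sum_primes_one_add_log_le hx0
    _ = (1 + log 4) * x ^ ((3 : ℝ) / 2) := by
        rw [mul_left_comm, sqrt_eq_rpow, ← rpow_add_one (by linarith)]; norm_num
end

section
/- Let U ≥ 2 and let Φ : ℝ → ℝ be a smooth function supported in (1,2) with 0 ≤ Φ ≤ 1, Φ(t) = 1 for t ∈ (1 + 1/U, 2 − 1/U), and |Φ'(t)| ≤ C₁·U for all t. Then there is a constant C depending only on C₁ such that for all real Y > 0, all real p ≥ 1 and all integers α ≥ 1: ∑_{m=1}^{∞} |Φ̃(m²Y/(2α²p))| ≤ C·α·√(p/Y). -/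
open MeasureTheory Set

/-- `F̃(ξ) = ∫ (cos(2πξx) + sin(2πξx)) F(x) dx`. -/
noncomputable def Ftilde (F : ℝ → ℝ) (ξ : ℝ) : ℝ :=
  ∫ x : ℝ, (Real.cos (2 * Real.pi * ξ * x) + Real.sin (2 * Real.pi * ξ * x)) * F x


/-- interval integral of a function vanishing on the open interval is zero -/
lemma intInt_zero_of_Ioo {f : ℝ → ℝ} {a b : ℝ} (hab : a ≤ b)
    (h : ∀ x ∈ Set.Ioo a b, f x = 0) : ∫ x in a..b, f x = 0 := by
  rw [intervalIntegral.integral_of_le hab, MeasureTheory.integral_Ioc_eq_integral_Ioo,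
    MeasureTheory.setIntegral_congr_fun measurableSet_Ioo h, MeasureTheory.integral_zero]

lemma sum_inv_sq_aux (K : ℕ) (hK : 1 ≤ K) :
    ∀ N : ℕ, K ≤ N + 1 → ∑ m ∈ Finset.Icc K N, (1 : ℝ) / (m : ℝ) ^ 2 ≤ 2 / K - 2 / (N + 1) := by
  intro N
  induction N with
  | zero =>
      intro hN
      interval_cases K
      simp
  | succ n ih =>
      intro hN
      rcases Nat.lt_or_ge n.succ K with hlt | hge
      · have hK' : K = n + 2 := by omega
        rw [Finset.Icc_eq_empty (by omega)]
        subst hK'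
        simp
        rw [div_le_div_iff₀ (by positivity) (by positivity)]
        push_cast; ring_nf; nlinarith
      · have h1 : K ≤ n + 1 := hge
        rw [Finset.sum_Icc_succ_top h1]
        have h2 := ih (by omega)
        have h3 : (1 : ℝ) / ((n + 1 : ℕ) : ℝ) ^ 2 ≤ 2 / ((n:ℝ) + 1) - 2 / ((n:ℝ) + 2) := by
          push_cast
          rw [div_sub_div _ _ (by positivity) (by positivity), div_le_div_iff₀ (by positivity) (by positivity)]
          ring_nf
          nlinarith [sq_nonneg ((n:ℝ))]
        push_cast at h2 h3 ⊢
        have e : ((n:ℝ) + 1 + 1) = (n:ℝ) + 2 := by ring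
        rw [e]
        linarith

lemma sum_inv_sq_le (K N : ℕ) (hK : 1 ≤ K) :
    ∑ m ∈ Finset.Icc K N, (1 : ℝ) / (m : ℝ) ^ 2 ≤ 2 / K := by
  rcases Nat.lt_or_ge N K with h | h
  · rw [Finset.Icc_eq_empty (by omega)]
    simp
    positivity
  · have := sum_inv_sq_aux K hK N (by omega)
    have h2 : (0:ℝ) ≤ 2 / ((N:ℝ) + 1) := by positivity
    linarith

/-- summation lemma -/
lemma sum_min_le (f : ℕ → ℝ) (N : ℕ) (A c : ℝ) (hA : 0 < A) (hc : 0 ≤ c)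
    (h2 : ∀ m, |f m| ≤ 2) (hdecay : ∀ m : ℕ, 1 ≤ m → |f m| ≤ c * A / (m : ℝ) ^ 2) :
    ∑ m ∈ Finset.Icc 1 N, |f m| ≤ (2 + 2 * c) * Real.sqrt A := by
  set M : ℕ := Nat.floor (Real.sqrt A) with hM
  have hsqrtpos : 0 < Real.sqrt A := Real.sqrt_pos.mpr hA
  have hsub : Finset.Icc 1 N ⊆ Finset.Icc 1 M ∪ Finset.Icc (M + 1) N := by
    intro m hm
    simp only [Finset.mem_Icc, Finset.mem_union] at hm ⊢
    omega
  have hdisj : Disjoint (Finset.Icc 1 M) (Finset.Icc (M + 1) N) := by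
    rw [Finset.disjoint_left]
    intro m hm hm'
    simp only [Finset.mem_Icc] at hm hm'
    omega
  calc ∑ m ∈ Finset.Icc 1 N, |f m|
      ≤ ∑ m ∈ Finset.Icc 1 M ∪ Finset.Icc (M + 1) N, |f m| :=
        Finset.sum_le_sum_of_subset_of_nonneg hsub (fun m _ _ => abs_nonneg _)
    _ = ∑ m ∈ Finset.Icc 1 M, |f m| + ∑ m ∈ Finset.Icc (M + 1) N, |f m| :=
        Finset.sum_union hdisj
    _ ≤ 2 * Real.sqrt A + 2 * c * Real.sqrt A := by
        gcongr ?_ + ?_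
        · calc ∑ m ∈ Finset.Icc 1 M, |f m| ≤ ∑ m ∈ Finset.Icc 1 M, (2:ℝ) :=
                Finset.sum_le_sum (fun m _ => h2 m)
            _ = 2 * M := by simp [mul_comm]
            _ ≤ 2 * Real.sqrt A := by
                have := Nat.floor_le (le_of_lt hsqrtpos)
                nlinarith
        · calc ∑ m ∈ Finset.Icc (M + 1) N, |f m|
              ≤ ∑ m ∈ Finset.Icc (M + 1) N, c * A * ((1:ℝ) / (m : ℝ) ^ 2) := by
                refine Finset.sum_le_sum (fun m hm => ?_)
                have h1m : 1 ≤ m := by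
                  simp only [Finset.mem_Icc] at hm; omega
                have := hdecay m h1m
                rw [mul_one_div]
                exact this
            _ = c * A * ∑ m ∈ Finset.Icc (M + 1) N, ((1:ℝ) / (m : ℝ) ^ 2) := by
                rw [Finset.mul_sum]
            _ ≤ c * A * (2 / (M + 1)) := by
                have := sum_inv_sq_le (M + 1) N (by omega)
                have hca : 0 ≤ c * A := by positivity
                push_cast at this ⊢
                exact mul_le_mul_of_nonneg_left this hca
            _ ≤ 2 * c * Real.sqrt A := by
                have hlt : Real.sqrt A < (M:ℝ) + 1 := Nat.lt_floor_add_one _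
                have step : c * A * (2 / ((M:ℝ) + 1)) ≤ c * A * (2 / Real.sqrt A) := by
                  gcongr
                refine step.trans (le_of_eq ?_)
                have hdiv : A / Real.sqrt A = Real.sqrt A := Real.div_sqrt
                calc c * A * (2 / Real.sqrt A) = 2 * c * (A / Real.sqrt A) := by ring
                  _ = 2 * c * Real.sqrt A := by rw [hdiv]
    _ = (2 + 2 * c) * Real.sqrt A := by ring

lemma intInt_zero_of_Ioo' {f : ℝ → ℝ} {a b : ℝ} (hab : a ≤ b)
    (h : ∀ x ∈ Set.Ioo a b, f x = 0) : ∫ x in a..b, f x = 0 := by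
  rw [intervalIntegral.integral_of_le hab, MeasureTheory.integral_Ioc_eq_integral_Ioo,
    MeasureTheory.setIntegral_congr_fun measurableSet_Ioo h, MeasureTheory.integral_zero]

section Analytic

variable {Φ : ℝ → ℝ} (hsupp : Function.support Φ ⊆ Set.Ioo 1 2)

lemma Phi_zero (hsupp : Function.support Φ ⊆ Set.Ioo 1 2) :
    ∀ x, x ∉ Set.Ioo (1:ℝ) 2 → Φ x = 0 := fun x hx =>
  Function.notMem_support.mp (fun hs => hx (hsupp hs))

lemma Ftilde_eq_intervalIntegral (hsupp : Function.support Φ ⊆ Set.Ioo 1 2) (ξ : ℝ) :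
    Ftilde Φ ξ
      = ∫ x in (0:ℝ)..3, (Real.cos (2 * Real.pi * ξ * x) + Real.sin (2 * Real.pi * ξ * x)) * Φ x := by
  rw [intervalIntegral.integral_of_le (by norm_num : (0:ℝ) ≤ 3), Ftilde]
  refine (MeasureTheory.setIntegral_eq_integral_of_forall_compl_eq_zero (fun x hx => ?_)).symm
  have : Φ x = 0 := by
    refine Phi_zero hsupp x (fun hx2 => hx ?_)
    exact ⟨by linarith [hx2.1], by linarith [hx2.2]⟩
  rw [this, mul_zero]

lemma Ftilde_trivial_bound (hΦ : ContDiff ℝ (⊤ : ℕ∞) Φ) (hsupp : Function.support Φ ⊆ Set.Ioo 1 2)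
    (hΦ0 : ∀ t, 0 ≤ Φ t) (hΦ1 : ∀ t, Φ t ≤ 1) (ξ : ℝ) : |Ftilde Φ ξ| ≤ 2 := by
  set f : ℝ → ℝ := fun x =>
    (Real.cos (2 * Real.pi * ξ * x) + Real.sin (2 * Real.pi * ξ * x)) * Φ x with hf
  have hcont : Continuous f := by
    apply Continuous.mul _ hΦ.continuous
    exact ((Real.continuous_cos.comp (by continuity)).add (Real.continuous_sin.comp (by continuity)))
  have hii : ∀ u v : ℝ, IntervalIntegrable (fun x => |f x|) volume u v :=
    fun u v => (hcont.abs).intervalIntegrable u v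
  rw [Ftilde_eq_intervalIntegral hsupp]
  have habs := intervalIntegral.abs_integral_le_integral_abs (μ := volume)
    (f := f) (by norm_num : (0:ℝ) ≤ 3)
  refine habs.trans ?_
  have hsplit : (∫ x in (0:ℝ)..3, |f x|)
      = (∫ x in (0:ℝ)..1, |f x|) + (∫ x in (1:ℝ)..2, |f x|) + (∫ x in (2:ℝ)..3, |f x|) := by
    rw [intervalIntegral.integral_add_adjacent_intervals (hii 0 1) (hii 1 2),
      intervalIntegral.integral_add_adjacent_intervals (hii 0 2) (hii 2 3)]
  rw [hsplit]
  have h01 : (∫ x in (0:ℝ)..1, |f x|) = 0 := by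
    refine intInt_zero_of_Ioo' (by norm_num) (fun x hx => ?_)
    have : Φ x = 0 := Phi_zero hsupp x (fun hx2 => by linarith [hx.2, hx2.1])
    simp [hf, this]
  have h23 : (∫ x in (2:ℝ)..3, |f x|) = 0 := by
    refine intInt_zero_of_Ioo' (by norm_num) (fun x hx => ?_)
    have : Φ x = 0 := Phi_zero hsupp x (fun hx2 => by linarith [hx.1, hx2.2])
    simp [hf, this]
  have h12 : (∫ x in (1:ℝ)..2, |f x|) ≤ 2 := by
    have hmono := intervalIntegral.integral_mono_on (a := (1:ℝ)) (b := 2) (μ := volume)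
      (f := fun x => |f x|) (g := fun _ => (2:ℝ)) (by norm_num) (hii 1 2)
      (intervalIntegrable_const) ?_
    · have : (∫ _x in (1:ℝ)..2, (2:ℝ)) = 2 := by rw [intervalIntegral.integral_const]; norm_num
      linarith [hmono, this.symm]
    · intro x _
      have h1 : |Real.cos (2 * Real.pi * ξ * x) + Real.sin (2 * Real.pi * ξ * x)| ≤ 2 := by
        calc |Real.cos (2 * Real.pi * ξ * x) + Real.sin (2 * Real.pi * ξ * x)|
            ≤ |Real.cos (2 * Real.pi * ξ * x)| + |Real.sin (2 * Real.pi * ξ * x)| := abs_add_le _ _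
          _ ≤ 1 + 1 := add_le_add (Real.abs_cos_le_one _) (Real.abs_sin_le_one _)
          _ = 2 := by norm_num
      have h2 : |Φ x| ≤ 1 := abs_le.mpr ⟨by linarith [hΦ0 x], hΦ1 x⟩
      calc |f x| = |Real.cos (2 * Real.pi * ξ * x) + Real.sin (2 * Real.pi * ξ * x)| * |Φ x| := by
            rw [hf]; exact abs_mul _ _
        _ ≤ 2 * 1 := mul_le_mul h1 h2 (abs_nonneg _) (by norm_num)
        _ = 2 := by norm_num
  linarith

end Analytic
lemma Ftilde_decay_bound {C₁ U : ℝ} (hU : 2 ≤ U) {Φ : ℝ → ℝ} (hΦ : ContDiff ℝ (⊤ : ℕ∞) Φ)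
    (hsupp : Function.support Φ ⊆ Set.Ioo 1 2)
    (hΦmid : ∀ t ∈ Set.Ioo (1 + 1 / U) (2 - 1 / U), Φ t = 1)
    (hΦ' : ∀ t, |deriv Φ t| ≤ C₁ * U) {ξ : ℝ} (hξ : 0 < ξ) :
    |Ftilde Φ ξ| ≤ 2 * C₁ / (Real.pi * ξ) := by
  have hπ : 0 < Real.pi := Real.pi_pos
  have hU0 : 0 < U := by linarith
  have hC₁ : 0 ≤ C₁ := by nlinarith [abs_nonneg (deriv Φ 0), hΦ' 0]
  set c : ℝ := 2 * Real.pi * ξ with hc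
  have hc0 : 0 < c := by positivity
  set g : ℝ → ℝ := fun x => (Real.sin (c * x) - Real.cos (c * x)) / c with hg
  -- derivative of g
  have hgderiv : ∀ x : ℝ, HasDerivAt g (Real.cos (c * x) + Real.sin (c * x)) x := by
    intro x
    have hcx : HasDerivAt (fun y : ℝ => c * y) c x := by
      simpa using (hasDerivAt_id x).const_mul c
    have hsin : HasDerivAt (fun y => Real.sin (c * y)) (Real.cos (c * x) * c) x :=
      (Real.hasDerivAt_sin (c * x)).comp x hcx
    have hcos : HasDerivAt (fun y => Real.cos (c * y)) (-Real.sin (c * x) * c) x :=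
      (Real.hasDerivAt_cos (c * x)).comp x hcx
    have := (hsin.sub hcos).div_const c
    refine this.congr_deriv ?_
    rw [div_eq_iff hc0.ne']
    ring
  have hΦdiff : ∀ x : ℝ, HasDerivAt Φ (deriv Φ x) x := fun x =>
    ((hΦ.differentiable (by simp)) x).hasDerivAt
  have hΦ'cont : Continuous (deriv Φ) := hΦ.continuous_deriv (by simp)
  have hgΦ'cont : Continuous (fun x => g x * deriv Φ x) := by
    apply Continuous.mul _ hΦ'cont
    exact ((Real.continuous_sin.comp (by continuity)).sub
      (Real.continuous_cos.comp (by continuity))).div_const c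
  have hcs_cont : Continuous (fun x => Real.cos (c * x) + Real.sin (c * x)) :=
    (Real.continuous_cos.comp (by continuity)).add (Real.continuous_sin.comp (by continuity))
  -- integration by parts
  have hibp := intervalIntegral.integral_mul_deriv_eq_deriv_mul (a := (0:ℝ)) (b := 3)
    (u := g) (v := Φ) (u' := fun x => Real.cos (c * x) + Real.sin (c * x))
    (v' := deriv Φ) (fun x _ => hgderiv x) (fun x _ => hΦdiff x)
    (hcs_cont.intervalIntegrable 0 3) (hΦ'cont.intervalIntegrable 0 3)
  have hΦ30 : Φ 3 = 0 := Phi_zero hsupp 3 (by norm_num)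
  have hΦ00 : Φ 0 = 0 := Phi_zero hsupp 0 (by norm_num)
  rw [hΦ30, hΦ00, mul_zero, mul_zero, sub_zero, zero_sub] at hibp
  have heq : Ftilde Φ ξ = -∫ x in (0:ℝ)..3, g x * deriv Φ x := by
    rw [Ftilde_eq_intervalIntegral hsupp]
    have : (∫ x in (0:ℝ)..3, (Real.cos (2 * Real.pi * ξ * x) + Real.sin (2 * Real.pi * ξ * x)) * Φ x)
        = ∫ x in (0:ℝ)..3, (Real.cos (c * x) + Real.sin (c * x)) * Φ x := by
      rfl
    rw [this, hibp, neg_neg]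
  -- bound the integral
  set h : ℝ → ℝ := fun x => |g x * deriv Φ x| with hh
  have hii : ∀ u v : ℝ, IntervalIntegrable h volume u v :=
    fun u v => hgΦ'cont.abs.intervalIntegrable u v
  have hbound : |Ftilde Φ ξ| ≤ ∫ x in (0:ℝ)..3, h x := by
    rw [heq, abs_neg]
    exact intervalIntegral.abs_integral_le_integral_abs (by norm_num)
  -- split the interval
  set a : ℝ := 1 + 1 / U with ha
  set b : ℝ := 2 - 1 / U with hb
  have hU' : 1 / U ≤ 1 / 2 := by
    rw [div_le_div_iff₀ hU0 (by norm_num)]; linarith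
  have hU'' : 0 < 1 / U := by positivity
  have h1a : (1:ℝ) ≤ a := by rw [ha]; linarith
  have hab : a ≤ b := by rw [ha, hb]; linarith
  have hb2 : b ≤ 2 := by rw [hb]; linarith
  have hsplit : (∫ x in (0:ℝ)..3, h x)
      = (∫ x in (0:ℝ)..1, h x) + (∫ x in (1:ℝ)..a, h x) + (∫ x in a..b, h x)
        + (∫ x in b..(2:ℝ), h x) + (∫ x in (2:ℝ)..3, h x) := by
    rw [intervalIntegral.integral_add_adjacent_intervals (hii 0 1) (hii 1 a),
      intervalIntegral.integral_add_adjacent_intervals (hii 0 a) (hii a b),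
      intervalIntegral.integral_add_adjacent_intervals (hii 0 b) (hii b 2),
      intervalIntegral.integral_add_adjacent_intervals (hii 0 2) (hii 2 3)]
  -- deriv Φ vanishes off the two edge intervals
  have hderiv_zero_lt : ∀ x : ℝ, x < 1 → deriv Φ x = 0 := by
    intro x hx
    have : Φ =ᶠ[nhds x] (fun _ => 0) := by
      filter_upwards [Iio_mem_nhds hx] with y hy
      exact Phi_zero hsupp y (fun hy2 => by exact absurd hy2.1 (by simp at hy ⊢; linarith [hy]))
    rw [this.deriv_eq, deriv_const]
  have hderiv_zero_gt : ∀ x : ℝ, 2 < x → deriv Φ x = 0 := by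
    intro x hx
    have : Φ =ᶠ[nhds x] (fun _ => 0) := by
      filter_upwards [Ioi_mem_nhds hx] with y hy
      exact Phi_zero hsupp y (fun hy2 => by simp at hy; linarith [hy2.2])
    rw [this.deriv_eq, deriv_const]
  have hderiv_zero_mid : ∀ x : ℝ, x ∈ Set.Ioo a b → deriv Φ x = 0 := by
    intro x hx
    have : Φ =ᶠ[nhds x] (fun _ => 1) := by
      filter_upwards [Ioo_mem_nhds hx.1 hx.2] with y hy
      exact hΦmid y hy
    rw [this.deriv_eq, deriv_const]
  have h01 : (∫ x in (0:ℝ)..1, h x) = 0 :=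
    intInt_zero_of_Ioo' (by norm_num) (fun x hx => by
      rw [hh]; simp [hderiv_zero_lt x hx.2])
  have h23 : (∫ x in (2:ℝ)..3, h x) = 0 :=
    intInt_zero_of_Ioo' (by norm_num) (fun x hx => by
      rw [hh]; simp [hderiv_zero_gt x hx.1])
  have hmid : (∫ x in a..b, h x) = 0 :=
    intInt_zero_of_Ioo' hab (fun x hx => by
      rw [hh]; simp [hderiv_zero_mid x hx])
  -- bound on the edges
  have hgbnd : ∀ x : ℝ, |g x| ≤ 1 / (Real.pi * ξ) := by
    intro x
    rw [hg]
    rw [abs_div, abs_of_pos hc0]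
    rw [div_le_div_iff₀ hc0 (by positivity)]
    have h1 : |Real.sin (c * x) - Real.cos (c * x)| ≤ 2 := by
      calc |Real.sin (c * x) - Real.cos (c * x)|
          ≤ |Real.sin (c * x)| + |Real.cos (c * x)| := abs_sub _ _
        _ ≤ 1 + 1 := add_le_add (Real.abs_sin_le_one _) (Real.abs_cos_le_one _)
        _ = 2 := by norm_num
    calc |Real.sin (c * x) - Real.cos (c * x)| * (Real.pi * ξ) ≤ 2 * (Real.pi * ξ) := by
          apply mul_le_mul_of_nonneg_right h1 (by positivity)
      _ = 1 * c := by rw [hc]; ring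
  have hedge : ∀ u v : ℝ, u ≤ v → v - u = 1 / U →
      (∫ x in u..v, h x) ≤ C₁ / (Real.pi * ξ) := by
    intro u v huv hlen
    have hmono := intervalIntegral.integral_mono_on (a := u) (b := v) (μ := volume)
      (f := h) (g := fun _ => (1 / (Real.pi * ξ)) * (C₁ * U)) huv (hii u v)
      (intervalIntegrable_const) ?_
    · have hconst : (∫ _x in u..v, (1 / (Real.pi * ξ)) * (C₁ * U)) = (1/U) * ((1 / (Real.pi * ξ)) * (C₁ * U)) := by
        rw [intervalIntegral.integral_const, smul_eq_mul, hlen]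
      have : (1/U) * ((1 / (Real.pi * ξ)) * (C₁ * U)) = C₁ / (Real.pi * ξ) := by
        field_simp
      rw [hconst, this] at hmono
      exact hmono
    · intro x _
      show |g x * deriv Φ x| ≤ 1 / (Real.pi * ξ) * (C₁ * U)
      rw [abs_mul]
      exact mul_le_mul (hgbnd x) (hΦ' x) (abs_nonneg _) (by positivity)
  have h1a' : (∫ x in (1:ℝ)..a, h x) ≤ C₁ / (Real.pi * ξ) :=
    hedge 1 a (by linarith) (by rw [ha]; ring)
  have hb2' : (∫ x in b..(2:ℝ), h x) ≤ C₁ / (Real.pi * ξ) :=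
    hedge b 2 (by linarith) (by rw [hb]; ring)
  have : (∫ x in (0:ℝ)..3, h x) ≤ 2 * C₁ / (Real.pi * ξ) := by
    rw [hsplit, h01, h23, hmid]
    have : C₁ / (Real.pi * ξ) + C₁ / (Real.pi * ξ) = 2 * C₁ / (Real.pi * ξ) := by ring
    linarith
  linarith


/-- `∑_{m≥1} |Φ̃(m²Y/(2α²p))| ≪ α √(p/Y)` (stated for all partial sums, which is
equivalent since the summands are non-negative). -/
theorem Ftilde_square_sum_bound (C₁ : ℝ) :
    ∃ C : ℝ, ∀ U : ℝ, 2 ≤ U → ∀ Φ : ℝ → ℝ, ContDiff ℝ (⊤ : ℕ∞) Φ →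
      Function.support Φ ⊆ Set.Ioo 1 2 →
      (∀ t, 0 ≤ Φ t) → (∀ t, Φ t ≤ 1) →
      (∀ t ∈ Set.Ioo (1 + 1 / U) (2 - 1 / U), Φ t = 1) →
      (∀ t, |deriv Φ t| ≤ C₁ * U) →
      ∀ Y : ℝ, 0 < Y → ∀ p : ℝ, 1 ≤ p → ∀ α : ℕ, 1 ≤ α → ∀ N : ℕ,
        ∑ m ∈ Finset.Icc 1 N, |Ftilde Φ ((m : ℝ) ^ 2 * Y / (2 * (α : ℝ) ^ 2 * p))|
          ≤ C * α * Real.sqrt (p / Y) := by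
  refine ⟨4 + 4 * |C₁|, ?_⟩
  intro U hU Φ hΦ hsupp hΦ0 hΦ1 hΦmid hΦ' Y hY p hp α hα N
  have hU0 : 0 < U := by linarith
  have hC₁ : 0 ≤ C₁ := by nlinarith [abs_nonneg (deriv Φ 0), hΦ' 0]
  have hπ := Real.pi_pos
  have hα0 : 0 < (α : ℝ) := by exact_mod_cast Nat.lt_of_lt_of_le Nat.zero_lt_one hα
  have hp0 : 0 < p := by linarith
  set A : ℝ := 2 * (α : ℝ) ^ 2 * p / Y with hA
  have hA0 : 0 < A := by positivity
  have key := sum_min_le (fun m : ℕ => Ftilde Φ ((m : ℝ) ^ 2 * Y / (2 * (α : ℝ) ^ 2 * p)))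
    N A C₁ hA0 hC₁ (fun m => Ftilde_trivial_bound hΦ hsupp hΦ0 hΦ1 _) ?_
  · refine le_trans key ?_
    have hsqrtA : Real.sqrt A = (α : ℝ) * (Real.sqrt 2 * Real.sqrt (p / Y)) := by
      have e : A = (α : ℝ) ^ 2 * (2 * (p / Y)) := by rw [hA]; ring
      rw [e, Real.sqrt_mul (by positivity), Real.sqrt_sq hα0.le,
        Real.sqrt_mul (by norm_num : (0:ℝ) ≤ 2)]
    rw [hsqrtA, abs_of_nonneg hC₁]
    have hs2 : Real.sqrt 2 ≤ 2 := by
      nlinarith [Real.sq_sqrt (show (0:ℝ) ≤ 2 by norm_num), Real.sqrt_nonneg 2]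
    nlinarith [mul_nonneg (mul_nonneg (by linarith : (0:ℝ) ≤ 2 + 2 * C₁) hα0.le)
      (Real.sqrt_nonneg (p / Y)), Real.sqrt_nonneg 2, Real.sqrt_nonneg (p / Y),
      mul_nonneg hα0.le (Real.sqrt_nonneg (p / Y))]
  · intro m hm
    have hm0 : 0 < (m : ℝ) := by exact_mod_cast Nat.lt_of_lt_of_le Nat.zero_lt_one hm
    have hξ : 0 < (m : ℝ) ^ 2 * Y / (2 * (α : ℝ) ^ 2 * p) := by positivity
    refine le_trans (Ftilde_decay_bound hU hΦ hsupp hΦmid hΦ' hξ) ?_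
    rw [div_le_div_iff₀ (by positivity) (by positivity)]
    have hAξ : A * ((m : ℝ) ^ 2 * Y / (2 * (α : ℝ) ^ 2 * p)) = (m : ℝ) ^ 2 := by
      rw [hA]; field_simp
    nlinarith [Real.pi_gt_three, mul_nonneg hC₁ (sq_nonneg (m : ℝ)), hAξ,
      mul_nonneg (mul_nonneg hC₁ hA0.le) hξ.le]
end

section
/- Let U ≥ 2 and let Φ : ℝ → ℝ be a smooth function supported in (1,2) with 0 ≤ Φ ≤ 1, Φ(t) = 1 for t ∈ (1 + 1/U, 2 − 1/U), and |Φ'(t)| ≤ C₁·U for all t. Then there is a constant C depending only on C₁ such that for all real x, Y, z ≥ 2: |∑_{2 < p ≤ x, p prime} p^{−1/2} ∑_{α ≤ z, α odd, gcd(α,p)=1} (μ(α)/α²) ∑_{m ≥ 1, p ∤ m} (−1)^m·Φ̃(m²Y/(2α²p))| ≤ C·(x·log z)/Y^{1/2}. -/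
section
open Real MeasureTheory
lemma ftilde_trivial {Φ : ℝ → ℝ} (hc : ContDiff ℝ (⊤ : ℕ∞) Φ)
    (hsupp : Function.support Φ ⊆ Set.Ioo 1 2)
    (h0 : ∀ t, 0 ≤ Φ t) (h1 : ∀ t, Φ t ≤ 1) (ξ : ℝ) :
    |Ftilde Φ ξ| ≤ 2 := by
  have hΦc : Continuous Φ := hc.continuous
  have hcs : HasCompactSupport Φ := by
    apply HasCompactSupport.of_support_subset_isCompact (isCompact_Icc (a := (1:ℝ)) (b := 2))
    exact hsupp.trans Set.Ioo_subset_Icc_self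
  have hint : Integrable (fun x => (Real.cos (2 * Real.pi * ξ * x) + Real.sin (2 * Real.pi * ξ * x)) * Φ x) := by
    apply Continuous.integrable_of_hasCompactSupport
    · exact ((Real.continuous_cos.comp (by fun_prop)).add (Real.continuous_sin.comp (by fun_prop))).mul hΦc
    · exact hcs.mul_left
  have hbound : ∀ x : ℝ, |(Real.cos (2 * Real.pi * ξ * x) + Real.sin (2 * Real.pi * ξ * x)) * Φ x|
      ≤ Set.indicator (Set.Ioo (1:ℝ) 2) (fun _ => 2) x := by
    intro x
    by_cases hx : x ∈ Set.Ioo (1:ℝ) 2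
    · rw [Set.indicator_of_mem hx, abs_mul]
      have : |Φ x| ≤ 1 := by rw [abs_of_nonneg (h0 x)]; exact h1 x
      calc |Real.cos (2 * Real.pi * ξ * x) + Real.sin (2 * Real.pi * ξ * x)| * |Φ x|
          ≤ 2 * 1 := by
            apply mul_le_mul _ this (abs_nonneg _) (by norm_num)
            calc |Real.cos _ + Real.sin _| ≤ |Real.cos _| + |Real.sin _| := abs_add_le _ _
              _ ≤ 1 + 1 := add_le_add (Real.abs_cos_le_one _) (Real.abs_sin_le_one _)
              _ = 2 := by norm_num
        _ = 2 := by norm_num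
    · rw [Set.indicator_of_notMem hx]
      have : Φ x = 0 := by
        by_contra h
        exact hx (hsupp (Function.mem_support.mpr h))
      simp [this]
  calc |Ftilde Φ ξ| ≤ ∫ x, |(Real.cos (2 * Real.pi * ξ * x) + Real.sin (2 * Real.pi * ξ * x)) * Φ x| := by
        simpa [Ftilde, abs_mul] using MeasureTheory.norm_integral_le_integral_norm (μ := volume) (fun x => (Real.cos (2 * Real.pi * ξ * x) + Real.sin (2 * Real.pi * ξ * x)) * Φ x)
    _ ≤ ∫ x, Set.indicator (Set.Ioo (1:ℝ) 2) (fun _ => (2:ℝ)) x := by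
        apply integral_mono hint.abs _ hbound
        exact (integrable_indicator_iff measurableSet_Ioo).mpr (by simp [integrableOn_const])
    _ = 2 := by
        rw [integral_indicator measurableSet_Ioo]
        simp [Real.volume_Ioo]; norm_num
end

section
open Real MeasureTheory Set
lemma ftilde_decay {U C₁ : ℝ} (hU : 2 ≤ U) {Φ : ℝ → ℝ} (hc : ContDiff ℝ (⊤ : ℕ∞) Φ)
    (hsupp : Function.support Φ ⊆ Set.Ioo 1 2)
    (hone : ∀ t ∈ Set.Ioo (1 + 1/U) (2 - 1/U), Φ t = 1)
    (hderiv : ∀ t, |deriv Φ t| ≤ C₁ * U) {ξ : ℝ} (hξ : 0 < ξ) :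
    |Ftilde Φ ξ| ≤ 2 * C₁ / ξ := by
  have hU0 : (0:ℝ) < U := by linarith
  have hC₁ : 0 ≤ C₁ := by nlinarith [(abs_nonneg (deriv Φ 0)).trans (hderiv 0)]
  have hπ : (0:ℝ) < Real.pi := Real.pi_pos
  set c : ℝ := 2 * Real.pi * ξ with hc_def
  have hc0 : c ≠ 0 := by positivity
  have hΦc : Continuous Φ := hc.continuous
  have hcs : HasCompactSupport Φ := by
    apply HasCompactSupport.of_support_subset_isCompact (isCompact_Icc (a := (1:ℝ)) (b := 2))
    exact hsupp.trans Set.Ioo_subset_Icc_self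
  have hΦ' : Continuous (deriv Φ) := hc.continuous_deriv (by simp)
  have hcs' : HasCompactSupport (deriv Φ) := hcs.deriv
  set v : ℝ → ℝ := fun x => (Real.sin (c * x) - Real.cos (c * x)) / c with hv_def
  have hv : ∀ x, HasDerivAt v (Real.cos (c * x) + Real.sin (c * x)) x := by
    intro x
    have h1 : HasDerivAt (fun x => Real.sin (c * x)) (Real.cos (c * x) * c) x :=
      (Real.hasDerivAt_sin (c * x)).comp x (by simpa using (hasDerivAt_id x).const_mul c)
    have h2 : HasDerivAt (fun x => Real.cos (c * x)) (-Real.sin (c * x) * c) x :=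
      (Real.hasDerivAt_cos (c * x)).comp x (by simpa using (hasDerivAt_id x).const_mul c)
    have := (h1.sub h2).div_const c
    refine this.congr_deriv ?_
    rw [div_eq_iff hc0]
    ring
  have hvb : ∀ x, |v x| ≤ 1 / (Real.pi * ξ) := by
    intro x
    rw [hv_def]
    rw [abs_div, abs_of_pos (show (0:ℝ) < c by positivity)]
    rw [div_le_div_iff₀ (by positivity) (by positivity)]
    have : |Real.sin (c * x) - Real.cos (c * x)| ≤ 2 := by
      calc |Real.sin (c*x) - Real.cos (c*x)| ≤ |Real.sin (c*x)| + |Real.cos (c*x)| := abs_sub _ _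
        _ ≤ 1 + 1 := add_le_add (Real.abs_sin_le_one _) (Real.abs_cos_le_one _)
        _ = 2 := by norm_num
    calc |Real.sin (c*x) - Real.cos (c*x)| * (Real.pi * ξ) ≤ 2 * (Real.pi * ξ) := by
          apply mul_le_mul_of_nonneg_right this (by positivity)
      _ = 1 * c := by rw [hc_def]; ring
  have hu : ∀ x, HasDerivAt Φ (deriv Φ x) x :=
    fun x => ((hc.differentiable (by simp)) x).hasDerivAt
  have hvc : Continuous v := by fun_prop
  have hv'c : Continuous (fun x => Real.cos (c * x) + Real.sin (c * x)) := by fun_prop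
  have hint1 : Integrable (Φ * fun x => Real.cos (c * x) + Real.sin (c * x)) :=
    ((hΦc.mul hv'c).integrable_of_hasCompactSupport hcs.mul_right)
  have hint2 : Integrable (deriv Φ * v) :=
    ((hΦ'.mul hvc).integrable_of_hasCompactSupport hcs'.mul_right)
  have hint3 : Integrable (Φ * v) :=
    ((hΦc.mul hvc).integrable_of_hasCompactSupport hcs.mul_right)
  have hparts : ∫ x : ℝ, Φ x * (Real.cos (c * x) + Real.sin (c * x)) = - ∫ x : ℝ, deriv Φ x * v x :=
    MeasureTheory.integral_mul_deriv_eq_deriv_mul_of_integrable (fun x _ => hu x) (fun x _ => hv x) hint1 hint2 hint3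
  have hFt : Ftilde Φ ξ = - ∫ x : ℝ, deriv Φ x * v x := by
    rw [Ftilde, ← hparts]
    congr 1
    ext x
    rw [hc_def]
    ring
  -- bound the set where deriv Φ ≠ 0
  set E : Set ℝ := Set.Icc 1 (1 + 1/U) ∪ Set.Icc (2 - 1/U) 2 with hE_def
  have hderiv_zero : ∀ x : ℝ, x ∉ E → deriv Φ x = 0 := by
    intro x hx
    simp only [hE_def, Set.mem_union, Set.mem_Icc, not_or, not_and_or, not_le] at hx
    obtain ⟨hx1, hx2⟩ := hx
    have hzero : ∀ s : Set ℝ, IsOpen s → x ∈ s → (∀ y ∈ s, Φ y = Φ x) → deriv Φ x = 0 := by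
      intro s hs hxs hconst
      have : Φ =ᶠ[nhds x] fun _ => Φ x :=
        Filter.eventually_of_mem (hs.mem_nhds hxs) (fun y hy => hconst y hy)
      rw [this.deriv_eq, deriv_const]
    rcases hx1 with hx1 | hx1
    · -- x < 1
      have hΦ0 : ∀ y ∈ Set.Iio (1:ℝ), Φ y = 0 := by
        intro y hy
        by_contra h
        have := hsupp (Function.mem_support.mpr h)
        exact absurd this.1 (not_lt.mpr (le_of_lt hy))
      have := hzero (Set.Iio 1) isOpen_Iio hx1 (fun y hy => by rw [hΦ0 y hy, hΦ0 x hx1])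
      exact this
    · -- x > 1 + 1/U
      rcases hx2 with hx2 | hx2
      · -- x < 2 - 1/U : in the middle, Φ = 1
        have hxm : x ∈ Set.Ioo (1 + 1/U) (2 - 1/U) := ⟨hx1, hx2⟩
        exact hzero _ isOpen_Ioo hxm (fun y hy => by rw [hone y hy, hone x hxm])
      · -- x > 2
        have hΦ0 : ∀ y ∈ Set.Ioi (2:ℝ), Φ y = 0 := by
          intro y hy
          by_contra h
          have := hsupp (Function.mem_support.mpr h)
          exact absurd this.2 (not_lt.mpr (le_of_lt hy))
        exact hzero (Set.Ioi 2) isOpen_Ioi hx2 (fun y hy => by rw [hΦ0 y hy, hΦ0 x hx2])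
  have hEmeas : MeasurableSet E := (measurableSet_Icc.union measurableSet_Icc)
  have hEvol : volume E ≤ ENNReal.ofReal (2 / U) := by
    calc volume E ≤ volume (Set.Icc (1:ℝ) (1 + 1/U)) + volume (Set.Icc (2 - 1/U) (2:ℝ)) :=
          measure_union_le _ _
      _ = ENNReal.ofReal (1/U) + ENNReal.ofReal (1/U) := by
          rw [Real.volume_Icc, Real.volume_Icc]
          norm_num
      _ = ENNReal.ofReal (2/U) := by
          rw [← ENNReal.ofReal_add (by positivity) (by positivity)]
          norm_num
          ring_nf
  have hptwise : ∀ x : ℝ, |deriv Φ x * v x| ≤ Set.indicator E (fun _ => C₁ * U * (1 / (Real.pi * ξ))) x := by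
    intro x
    by_cases hx : x ∈ E
    · rw [Set.indicator_of_mem hx, abs_mul]
      exact mul_le_mul (hderiv x) (hvb x) (abs_nonneg _) (by positivity)
    · rw [Set.indicator_of_notMem hx, hderiv_zero x hx]
      simp
  have hbound : |∫ x : ℝ, deriv Φ x * v x| ≤ 2 * C₁ / (Real.pi * ξ) := by
    calc |∫ x : ℝ, deriv Φ x * v x| ≤ ∫ x : ℝ, |deriv Φ x * v x| := by
          simpa [abs_mul] using MeasureTheory.norm_integral_le_integral_norm (μ := volume) (fun x => deriv Φ x * v x)
      _ ≤ ∫ x : ℝ, Set.indicator E (fun _ => C₁ * U * (1 / (Real.pi * ξ))) x := by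
          apply integral_mono hint2.abs _ hptwise
          exact (integrable_indicator_iff hEmeas).mpr (integrableOn_const (lt_of_le_of_lt hEvol ENNReal.ofReal_lt_top).ne)
      _ = C₁ * U * (1 / (Real.pi * ξ)) * (volume E).toReal := by
          rw [integral_indicator hEmeas]
          simp [mul_comm, measureReal_def]
      _ ≤ C₁ * U * (1 / (Real.pi * ξ)) * (2 / U) := by
          apply mul_le_mul_of_nonneg_left _ (by positivity)
          rw [← ENNReal.ofReal_toReal (show volume E ≠ ⊤ from (lt_of_le_of_lt hEvol ENNReal.ofReal_lt_top).ne)] at hEvol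
          exact (ENNReal.ofReal_le_ofReal_iff (by positivity)).mp hEvol
      _ = 2 * C₁ / (Real.pi * ξ) := by field_simp
  rw [hFt, abs_neg]
  calc |∫ x : ℝ, deriv Φ x * v x| ≤ 2 * C₁ / (Real.pi * ξ) := hbound
    _ ≤ 2 * C₁ / ξ := by
      apply div_le_div_of_nonneg_left (by positivity) hξ
      nlinarith [Real.pi_gt_three]
end

section
open Real Finset
lemma summable_min_term {A : ℝ} (hA : 0 ≤ A) :
    Summable (fun m : ℕ => min 2 (A / (m:ℝ)^2)) := by
  apply Summable.of_nonneg_of_le (fun m => le_min (by norm_num) (by positivity))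
    (fun m => min_le_right _ _)
  simpa [div_eq_mul_inv] using ((Real.summable_one_div_nat_pow.mpr one_lt_two).mul_left A)

lemma tsum_min_le {A : ℝ} (hA : 0 ≤ A) :
    ∑' m : ℕ, min 2 (A / (m:ℝ)^2) ≤ 8 * Real.sqrt A := by
  have hg0 : ∀ m : ℕ, 0 ≤ min 2 (A / (m:ℝ)^2) := fun m => le_min (by norm_num) (by positivity)
  apply tsum_le_of_sum_range_le hg0
  intro n
  rcases le_or_gt A 1 with hA1 | hA1
  · -- A ≤ 1 : use min ≤ A/m²
    have hsA : A ≤ Real.sqrt A := by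
      have h1 : Real.sqrt A ≤ 1 := by nlinarith [Real.sq_sqrt hA, Real.sqrt_nonneg A, sq_nonneg (Real.sqrt A - 1)]
      nlinarith [Real.sq_sqrt hA, Real.sqrt_nonneg A]
    calc ∑ m ∈ range n, min 2 (A / (m:ℝ)^2) ≤ ∑ m ∈ range n, A * ((m:ℝ)^2)⁻¹ := by
          apply Finset.sum_le_sum
          intro m _
          rw [div_eq_mul_inv] at *
          exact min_le_right _ _
      _ = A * ∑ m ∈ range n, ((m:ℝ)^2)⁻¹ := by rw [Finset.mul_sum]
      _ ≤ A * 2 := by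
          apply mul_le_mul_of_nonneg_left _ hA
          rcases Nat.lt_or_ge n 2 with hn | hn
          · interval_cases n <;> norm_num
          · have : range n = range 2 ∪ Finset.Ioo 1 n := by
              rw [Finset.range_eq_Ico]
              rw [← Finset.Ico_union_Ico_eq_Ico (by norm_num) hn]
              congr 1
            rw [this, Finset.sum_union]
            · have h1 : ∑ m ∈ range 2, ((m:ℝ)^2)⁻¹ = 1 := by norm_num
              have h2 : ∑ m ∈ Finset.Ioo 1 n, ((m:ℝ)^2)⁻¹ ≤ 2/(1+1) := by
                have := sum_Ioo_inv_sq_le (α := ℝ) 1 n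
                simpa using this
              push_cast at h2 ⊢
              rw [h1]
              linarith
            · rw [Finset.range_eq_Ico]
              apply Finset.disjoint_left.mpr
              intro a ha hb
              simp at ha hb
              omega
      _ ≤ 8 * Real.sqrt A := by nlinarith [Real.sqrt_nonneg A]
  · -- A > 1
    set N : ℕ := ⌊Real.sqrt A⌋₊ + 1 with hN
    have hsA1 : 1 ≤ Real.sqrt A := by
      rw [show (1:ℝ) = Real.sqrt 1 by simp]
      exact Real.sqrt_le_sqrt hA1.le
    have hNge : Real.sqrt A ≤ N := by
      push_cast [hN]
      linarith [Nat.lt_floor_add_one (Real.sqrt A)]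
    have hNle : (N:ℝ) ≤ Real.sqrt A + 1 := by
      push_cast [hN]
      have := Nat.floor_le (Real.sqrt_nonneg A)
      linarith
    set M := max n (N+1) with hM
    calc ∑ m ∈ range n, min 2 (A / (m:ℝ)^2) ≤ ∑ m ∈ range M, min 2 (A / (m:ℝ)^2) := by
          apply Finset.sum_le_sum_of_subset_of_nonneg
          · exact Finset.range_subset_range.mpr (le_max_left _ _)
          · intro m _ _; exact hg0 m
      _ = ∑ m ∈ range (N+1), min 2 (A / (m:ℝ)^2) + ∑ m ∈ Finset.Ico (N+1) M, min 2 (A / (m:ℝ)^2) := by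
          rw [Finset.range_eq_Ico, ← Finset.sum_Ico_consecutive _ (Nat.zero_le _) (le_max_right n (N+1)), Finset.range_eq_Ico]
      _ ≤ (N+1) * 2 + ∑ m ∈ Finset.Ico (N+1) M, A * ((m:ℝ)^2)⁻¹ := by
          apply add_le_add
          · calc ∑ m ∈ range (N+1), min 2 (A / (m:ℝ)^2) ≤ ∑ _m ∈ range (N+1), (2:ℝ) :=
                Finset.sum_le_sum (fun m _ => min_le_left _ _)
              _ = (N+1) * 2 := by simp [mul_comm]
          · apply Finset.sum_le_sum
            intro m _
            rw [div_eq_mul_inv]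
            exact min_le_right _ _
      _ ≤ (N+1) * 2 + A * (2 / (N+1)) := by
          apply add_le_add le_rfl
          rw [← Finset.mul_sum]
          apply mul_le_mul_of_nonneg_left _ hA
          have h := sum_Ioo_inv_sq_le (α := ℝ) N M
          have heq : Finset.Ico (N+1) M = Finset.Ioo N M := rfl
          rw [heq]
          push_cast at h ⊢
          exact h
      _ ≤ 8 * Real.sqrt A := by
          have h1 : (N:ℝ) + 1 ≤ Real.sqrt A + 2 := by linarith
          have h2 : A * (2 / (N+1)) ≤ 2 * Real.sqrt A := by
            rw [mul_div_assoc']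
            rw [div_le_iff₀ (by positivity)]
            have : A = Real.sqrt A * Real.sqrt A := (Real.mul_self_sqrt hA).symm
            nlinarith [Real.sqrt_nonneg A]
          nlinarith [Real.sqrt_nonneg A]
end

open Real MeasureTheory Set Finset in
set_option maxHeartbeats 2000000 in
open Classical in
/-- The bound for the square term `S_{m=□}` in the proof of Theorem 1.3. -/
theorem square_term_bound (C₁ : ℝ) :
    ∃ C : ℝ, ∀ U : ℝ, 2 ≤ U → ∀ Φ : ℝ → ℝ, ContDiff ℝ (⊤ : ℕ∞) Φ →
      Function.support Φ ⊆ Set.Ioo 1 2 →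
      (∀ t, 0 ≤ Φ t) → (∀ t, Φ t ≤ 1) →
      (∀ t ∈ Set.Ioo (1 + 1 / U) (2 - 1 / U), Φ t = 1) →
      (∀ t, |deriv Φ t| ≤ C₁ * U) →
      ∀ x Y z : ℝ, 2 ≤ x → 2 ≤ Y → 2 ≤ z →
        |∑ p ∈ (Finset.Ioc 2 ⌊x⌋₊).filter Nat.Prime,
            (1 / Real.sqrt p) *
              ∑ α ∈ (Finset.Icc 1 ⌊z⌋₊).filter (fun α => Odd α ∧ Nat.Coprime α p),
                ((ArithmeticFunction.moebius α : ℝ) / (α : ℝ) ^ 2) *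
                  ∑' m : ℕ, (if 1 ≤ m ∧ ¬(p ∣ m) then
                      (-1 : ℝ) ^ m * Ftilde Φ ((m : ℝ) ^ 2 * Y / (2 * (α : ℝ) ^ 2 * p))
                    else 0)|
          ≤ C * (x * Real.log z) / Real.sqrt Y := by
  use 48 * (|C₁| + 1)
  intro U hU Φ hΦ hsupp h0 h1 hone hderiv x Y z hx hY hz
  have hU0 : (0:ℝ) < U := by linarith
  have hC₁ : 0 ≤ C₁ := by nlinarith [(abs_nonneg (deriv Φ 0)).trans (hderiv 0)]
  have hY0 : (0:ℝ) < Y := by linarith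
  have hsY : (0:ℝ) < Real.sqrt Y := Real.sqrt_pos.mpr hY0
  have hlz : (0:ℝ) < Real.log z := Real.log_pos (by linarith)
  set K := Real.sqrt C₁ with hK
  have hK0 : 0 ≤ K := Real.sqrt_nonneg _
  set P := (Finset.Ioc 2 ⌊x⌋₊).filter Nat.Prime with hP
  -- per-prime bound
  have hp_bound : ∀ p ∈ P,
      |(1 / Real.sqrt p) *
        ∑ α ∈ (Finset.Icc 1 ⌊z⌋₊).filter (fun α => Odd α ∧ Nat.Coprime α p),
          ((ArithmeticFunction.moebius α : ℝ) / (α : ℝ) ^ 2) *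
            ∑' m : ℕ, (if 1 ≤ m ∧ ¬(p ∣ m) then
                (-1 : ℝ) ^ m * Ftilde Φ ((m : ℝ) ^ 2 * Y / (2 * (α : ℝ) ^ 2 * p))
              else 0)|
      ≤ 16 * K * (1 + Real.log z) / Real.sqrt Y := by
    intro p hp
    rw [hP, Finset.mem_filter, Finset.mem_Ioc] at hp
    have hp3 : (3:ℝ) ≤ (p:ℝ) := by exact_mod_cast hp.1.1
    have hp0 : (0:ℝ) < (p:ℝ) := by linarith
    have hsp : (0:ℝ) < Real.sqrt p := Real.sqrt_pos.mpr hp0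
    -- per-α bound
    have hα_bound : ∀ α ∈ (Finset.Icc 1 ⌊z⌋₊).filter (fun α => Odd α ∧ Nat.Coprime α p),
        |((ArithmeticFunction.moebius α : ℝ) / (α : ℝ) ^ 2) *
            ∑' m : ℕ, (if 1 ≤ m ∧ ¬(p ∣ m) then
                (-1 : ℝ) ^ m * Ftilde Φ ((m : ℝ) ^ 2 * Y / (2 * (α : ℝ) ^ 2 * p))
              else 0)|
        ≤ (16 * K * Real.sqrt p / Real.sqrt Y) * (1 / (α:ℝ)) := by
      intro α hα
      rw [Finset.mem_filter, Finset.mem_Icc] at hα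
      have hα1 : (1:ℝ) ≤ (α:ℝ) := by exact_mod_cast hα.1.1
      have hα0 : (0:ℝ) < (α:ℝ) := by linarith
      set Aq : ℝ := 4 * C₁ * (α:ℝ)^2 * p / Y with hAq_def
      have hAq : 0 ≤ Aq := by positivity
      have hsqrtA : Real.sqrt Aq = 2 * K * (α:ℝ) * Real.sqrt p / Real.sqrt Y := by
        rw [show Aq = (2 * K * (α:ℝ) * Real.sqrt p / Real.sqrt Y)^2 by
          rw [div_pow]
          rw [mul_pow, mul_pow, mul_pow, hK, Real.sq_sqrt hC₁, Real.sq_sqrt hp0.le,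
            Real.sq_sqrt hY0.le, hAq_def]
          ring]
        exact Real.sqrt_sq (by positivity)
      have hterm : ∀ m : ℕ, |if 1 ≤ m ∧ ¬(p ∣ m) then
          (-1 : ℝ) ^ m * Ftilde Φ ((m : ℝ) ^ 2 * Y / (2 * (α : ℝ) ^ 2 * p)) else 0|
          ≤ min 2 (Aq / (m:ℝ)^2) := by
        intro m
        by_cases hm : 1 ≤ m ∧ ¬(p ∣ m)
        · rw [if_pos hm]
          have hm1 : (1:ℝ) ≤ (m:ℝ) := by exact_mod_cast hm.1
          have hm0 : (0:ℝ) < (m:ℝ) := by linarith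
          have hξ : (0:ℝ) < (m : ℝ) ^ 2 * Y / (2 * (α : ℝ) ^ 2 * p) := by positivity
          rw [abs_mul, abs_pow, abs_neg, abs_one, one_pow, one_mul]
          apply le_min
          · exact ftilde_trivial hΦ hsupp h0 h1 _
          · calc |Ftilde Φ ((m : ℝ) ^ 2 * Y / (2 * (α : ℝ) ^ 2 * p))|
                ≤ 2 * C₁ / ((m : ℝ) ^ 2 * Y / (2 * (α : ℝ) ^ 2 * p)) :=
                  ftilde_decay hU hΦ hsupp hone hderiv hξ
              _ = Aq / (m:ℝ)^2 := by
                  rw [hAq_def]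
                  field_simp
                  ring
        · rw [if_neg hm, abs_zero]
          exact le_min (by norm_num) (by positivity)
      have hgsum := summable_min_term hAq
      have hfabs : Summable (fun m : ℕ => |if 1 ≤ m ∧ ¬(p ∣ m) then
          (-1 : ℝ) ^ m * Ftilde Φ ((m : ℝ) ^ 2 * Y / (2 * (α : ℝ) ^ 2 * p)) else 0|) :=
        hgsum.of_nonneg_of_le (fun m => abs_nonneg _) hterm
      have hfsum : Summable (fun m : ℕ => if 1 ≤ m ∧ ¬(p ∣ m) then
          (-1 : ℝ) ^ m * Ftilde Φ ((m : ℝ) ^ 2 * Y / (2 * (α : ℝ) ^ 2 * p)) else 0) :=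
        hfabs.of_abs
      have hT : |∑' m : ℕ, (if 1 ≤ m ∧ ¬(p ∣ m) then
          (-1 : ℝ) ^ m * Ftilde Φ ((m : ℝ) ^ 2 * Y / (2 * (α : ℝ) ^ 2 * p)) else 0)|
          ≤ 16 * K * (α:ℝ) * Real.sqrt p / Real.sqrt Y := by
        calc |∑' m : ℕ, (if 1 ≤ m ∧ ¬(p ∣ m) then
            (-1 : ℝ) ^ m * Ftilde Φ ((m : ℝ) ^ 2 * Y / (2 * (α : ℝ) ^ 2 * p)) else 0)|
            ≤ ∑' m : ℕ, |if 1 ≤ m ∧ ¬(p ∣ m) then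
              (-1 : ℝ) ^ m * Ftilde Φ ((m : ℝ) ^ 2 * Y / (2 * (α : ℝ) ^ 2 * p)) else 0| := by
              have h := norm_tsum_le_tsum_norm (f := fun m : ℕ => if 1 ≤ m ∧ ¬(p ∣ m) then
                (-1 : ℝ) ^ m * Ftilde Φ ((m : ℝ) ^ 2 * Y / (2 * (α : ℝ) ^ 2 * p)) else 0)
                (by simpa [Real.norm_eq_abs] using hfabs)
              simpa [Real.norm_eq_abs] using h
          _ ≤ ∑' m : ℕ, min 2 (Aq / (m:ℝ)^2) := Summable.tsum_le_tsum hterm hfabs hgsum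
          _ ≤ 8 * Real.sqrt Aq := tsum_min_le hAq
          _ = 16 * K * (α:ℝ) * Real.sqrt p / Real.sqrt Y := by rw [hsqrtA]; ring
      rw [abs_mul]
      have hμ : |((ArithmeticFunction.moebius α : ℤ) : ℝ) / (α : ℝ) ^ 2| ≤ 1 / (α:ℝ)^2 := by
        rw [abs_div, abs_pow, abs_of_pos hα0]
        apply div_le_div_of_nonneg_right _ (by positivity)
        · exact_mod_cast ArithmeticFunction.abs_moebius_le_one
      calc |((ArithmeticFunction.moebius α : ℤ) : ℝ) / (α : ℝ) ^ 2| * _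
          ≤ (1/(α:ℝ)^2) * (16 * K * (α:ℝ) * Real.sqrt p / Real.sqrt Y) :=
            mul_le_mul hμ hT (abs_nonneg _) (by positivity)
        _ = (16 * K * Real.sqrt p / Real.sqrt Y) * (1 / (α:ℝ)) := by
            field_simp
    -- sum over α
    have hS : |∑ α ∈ (Finset.Icc 1 ⌊z⌋₊).filter (fun α => Odd α ∧ Nat.Coprime α p),
        ((ArithmeticFunction.moebius α : ℝ) / (α : ℝ) ^ 2) *
          ∑' m : ℕ, (if 1 ≤ m ∧ ¬(p ∣ m) then
              (-1 : ℝ) ^ m * Ftilde Φ ((m : ℝ) ^ 2 * Y / (2 * (α : ℝ) ^ 2 * p))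
            else 0)|
        ≤ (16 * K * Real.sqrt p / Real.sqrt Y) * (1 + Real.log z) := by
      calc _ ≤ ∑ α ∈ (Finset.Icc 1 ⌊z⌋₊).filter (fun α => Odd α ∧ Nat.Coprime α p),
              |((ArithmeticFunction.moebius α : ℝ) / (α : ℝ) ^ 2) *
                ∑' m : ℕ, (if 1 ≤ m ∧ ¬(p ∣ m) then
                    (-1 : ℝ) ^ m * Ftilde Φ ((m : ℝ) ^ 2 * Y / (2 * (α : ℝ) ^ 2 * p))
                  else 0)| := Finset.abs_sum_le_sum_abs _ _
        _ ≤ ∑ α ∈ (Finset.Icc 1 ⌊z⌋₊).filter (fun α => Odd α ∧ Nat.Coprime α p),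
              (16 * K * Real.sqrt p / Real.sqrt Y) * (1 / (α:ℝ)) := Finset.sum_le_sum hα_bound
        _ = (16 * K * Real.sqrt p / Real.sqrt Y) *
              ∑ α ∈ (Finset.Icc 1 ⌊z⌋₊).filter (fun α => Odd α ∧ Nat.Coprime α p), (1 / (α:ℝ)) := by
            rw [Finset.mul_sum]
        _ ≤ (16 * K * Real.sqrt p / Real.sqrt Y) * (1 + Real.log z) := by
            apply mul_le_mul_of_nonneg_left _ (by positivity)
            calc ∑ α ∈ (Finset.Icc 1 ⌊z⌋₊).filter (fun α => Odd α ∧ Nat.Coprime α p), (1 / (α:ℝ))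
                ≤ ∑ α ∈ Finset.Icc 1 ⌊z⌋₊, (1 / (α:ℝ)) := by
                  apply Finset.sum_le_sum_of_subset_of_nonneg (Finset.filter_subset _ _)
                  intro i _ _
                  positivity
              _ = ((harmonic ⌊z⌋₊ : ℚ) : ℝ) := by
                  rw [harmonic_eq_sum_Icc]
                  push_cast
                  simp [one_div]
              _ ≤ 1 + Real.log z := harmonic_floor_le_one_add_log z (by linarith)
    rw [abs_mul, abs_of_pos (show (0:ℝ) < 1 / Real.sqrt p by positivity)]
    calc (1 / Real.sqrt p) * _
        ≤ (1 / Real.sqrt p) * ((16 * K * Real.sqrt p / Real.sqrt Y) * (1 + Real.log z)) :=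
          mul_le_mul_of_nonneg_left hS (by positivity)
      _ = 16 * K * (1 + Real.log z) / Real.sqrt Y := by
          field_simp
  -- assemble
  have hcard : ((P.card : ℝ)) ≤ x := by
    have h1 : P.card ≤ (Finset.Ioc 2 ⌊x⌋₊).card := Finset.card_filter_le _ _
    have h2 : (Finset.Ioc 2 ⌊x⌋₊).card = ⌊x⌋₊ - 2 := by rw [Nat.card_Ioc]
    have h3 : (⌊x⌋₊ : ℝ) ≤ x := Nat.floor_le (by linarith)
    have : (P.card : ℝ) ≤ (⌊x⌋₊ : ℝ) := by
      have : P.card ≤ ⌊x⌋₊ := by omega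
      exact_mod_cast this
    linarith
  calc |∑ p ∈ P, (1 / Real.sqrt p) *
          ∑ α ∈ (Finset.Icc 1 ⌊z⌋₊).filter (fun α => Odd α ∧ Nat.Coprime α p),
            ((ArithmeticFunction.moebius α : ℝ) / (α : ℝ) ^ 2) *
              ∑' m : ℕ, (if 1 ≤ m ∧ ¬(p ∣ m) then
                  (-1 : ℝ) ^ m * Ftilde Φ ((m : ℝ) ^ 2 * Y / (2 * (α : ℝ) ^ 2 * p))
                else 0)|
      ≤ ∑ p ∈ P, |(1 / Real.sqrt p) *
          ∑ α ∈ (Finset.Icc 1 ⌊z⌋₊).filter (fun α => Odd α ∧ Nat.Coprime α p),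
            ((ArithmeticFunction.moebius α : ℝ) / (α : ℝ) ^ 2) *
              ∑' m : ℕ, (if 1 ≤ m ∧ ¬(p ∣ m) then
                  (-1 : ℝ) ^ m * Ftilde Φ ((m : ℝ) ^ 2 * Y / (2 * (α : ℝ) ^ 2 * p))
                else 0)| := Finset.abs_sum_le_sum_abs _ _
    _ ≤ ∑ _p ∈ P, 16 * K * (1 + Real.log z) / Real.sqrt Y := Finset.sum_le_sum hp_bound
    _ = (P.card : ℝ) * (16 * K * (1 + Real.log z) / Real.sqrt Y) := by
        rw [Finset.sum_const, nsmul_eq_mul]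
    _ ≤ x * (16 * K * (1 + Real.log z) / Real.sqrt Y) := by
        apply mul_le_mul_of_nonneg_right hcard (by positivity)
    _ ≤ 48 * (|C₁| + 1) * (x * Real.log z) / Real.sqrt Y := by
        have hKey : x * (16 * K * (1 + Real.log z)) ≤ 48 * (|C₁| + 1) * (x * Real.log z) := ?_
        · calc x * (16 * K * (1 + Real.log z) / Real.sqrt Y)
              = x * (16 * K * (1 + Real.log z)) / Real.sqrt Y := by ring
            _ ≤ 48 * (|C₁| + 1) * (x * Real.log z) / Real.sqrt Y := by gcongr
        have hKle : K ≤ |C₁| + 1 := by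
          rw [hK, abs_of_nonneg hC₁]
          nlinarith [Real.sq_sqrt hC₁, Real.sqrt_nonneg C₁, sq_nonneg (Real.sqrt C₁ - 1)]
        have hlog : 1 + Real.log z ≤ 3 * Real.log z := by
          have h2 : Real.log 2 ≤ Real.log z := Real.log_le_log (by norm_num) hz
          nlinarith [Real.log_two_gt_d9]
        have hx0 : (0:ℝ) ≤ x := by linarith
        calc x * (16 * K * (1 + Real.log z)) ≤ x * (16 * (|C₁|+1) * (3 * Real.log z)) := by
              apply mul_le_mul_of_nonneg_left _ hx0
              apply mul_le_mul (by nlinarith) hlog (by linarith) (by positivity)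
          _ = 48 * (|C₁| + 1) * (x * Real.log z) := by ring
end
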